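/- Let H be a cocommutative bialgebra over a commutative ring R, F a Drinfel'd twist on H with R-matrix ℛ := F₂₁ · F⁻¹ and ℛ⁻¹ = τ(ℛ) = Σ_k R_k ⊗ R^k, and let L be a Lie algebra in H-modules with twisted bracket [x, y]_⋆ := Σ_k ⁅f̄^k(x), f̄_k(y)⁆. Then the twisted bracket satisfies the braided Jacobi identity: for all x, y, z ∈ L, [x, [y, z]_⋆]_⋆ = [[x, y]_⋆, z]_⋆ + Σ_k [R_k(y), [R^k(x), z]_⋆]_⋆. In particular, the twist of a Lie algebra in H-modules is a braided Lie algebra. -/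

import Mathlib

open scoped TensorProduct

noncomputable section

/-- `Δ ⊗ id` as an algebra homomorphism `H ⊗ H → (H ⊗ H) ⊗ H`. -/
def comulTensorId (R H : Type*) [CommRing R] [Ring H] [Bialgebra R H] :
    (H ⊗[R] H) →ₐ[R] (H ⊗[R] H) ⊗[R] H :=
  Algebra.TensorProduct.map (Bialgebra.comulAlgHom R H) (AlgHom.id R H)

/-- `id ⊗ Δ` as an algebra homomorphism `H ⊗ H → H ⊗ (H ⊗ H)`. -/
def idTensorComul (R H : Type*) [CommRing R] [Ring H] [Bialgebra R H] :
    (H ⊗[R] H) →ₐ[R] H ⊗[R] (H ⊗[R] H) :=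
  Algebra.TensorProduct.map (AlgHom.id R H) (Bialgebra.comulAlgHom R H)

/-- `F` is a Drinfel'd twist on the bialgebra `H` with two-sided inverse `Finv`:
it is invertible and satisfies the 2-cocycle condition
`(F ⊗ 1) · (Δ ⊗ id)(F) = (1 ⊗ F) · (id ⊗ Δ)(F)` in `H ⊗ H ⊗ H`. -/
def IsDrinfeldTwist (R : Type*) {H : Type*} [CommRing R] [Ring H] [Bialgebra R H]
    (F Finv : H ⊗[R] H) : Prop :=
  F * Finv = 1 ∧ Finv * F = 1 ∧
    (TensorProduct.assoc R H H H) ((F ⊗ₜ[R] (1 : H)) * comulTensorId R H F) =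
      ((1 : H) ⊗ₜ[R] F) * idTensorComul R H F

/-- The `R`-matrix `ℛ := F₂₁ · F⁻¹` associated to a Drinfel'd twist, where
`F₂₁ = τ(F)` and `τ` is the flip of `H ⊗ H`. -/
def Rmat (R : Type*) {H : Type*} [CommRing R] [Ring H] [Bialgebra R H]
    (F Finv : H ⊗[R] H) : H ⊗[R] H :=
  (Algebra.TensorProduct.comm R H H) F * Finv

/-- The bialgebra `H` is cocommutative: `τ ∘ Δ = Δ`. -/
def IsCocommutative (R : Type*) (H : Type*) [CommRing R] [Ring H] [Bialgebra R H] : Prop :=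
  ∀ x : H, (Algebra.TensorProduct.comm R H H) (Coalgebra.comul (R := R) x) =
    Coalgebra.comul (R := R) x

/-- The action of an element of `H ⊗ H` on `M ⊗ N`, acting with the first leg on `M`
and the second leg on `N` through the given representations. -/
def legAct {R H : Type*} [CommRing R] [Ring H] [Algebra R H]
    {M N : Type*} [AddCommGroup M] [Module R M] [AddCommGroup N] [Module R N]
    (ρM : H →ₐ[R] Module.End R M) (ρN : H →ₐ[R] Module.End R N) :
    H ⊗[R] H →ₗ[R] (M ⊗[R] N →ₗ[R] M ⊗[R] N) :=
  (TensorProduct.homTensorHomMap (RingHom.id R) M N M N).comp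
    (TensorProduct.map ρM.toLinearMap ρN.toLinearMap)

/-- The Lie bracket of `L` as an `R`-bilinear map. -/
def lieBil (R L : Type*) [CommRing R] [LieRing L] [LieAlgebra R L] :
    L →ₗ[R] L →ₗ[R] L :=
  LinearMap.mk₂ R (fun x y => ⁅x, y⁆) add_lie smul_lie lie_add lie_smul

/-- `ρ` makes the `R`-Lie algebra `L` into a Lie algebra in `H`-modules:
`ρ(h)⁅x, y⁆ = Σ ⁅ρ(h₍₁₎)(x), ρ(h₍₂₎)(y)⁆`. -/
def IsHLieAlgebra (R : Type*) {H L : Type*} [CommRing R] [Ring H] [Bialgebra R H]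
    [LieRing L] [LieAlgebra R L] (ρ : H →ₐ[R] Module.End R L) : Prop :=
  ∀ (h : H) (x y : L),
    ρ h ⁅x, y⁆ =
      TensorProduct.lift (lieBil R L)
        (legAct ρ ρ (Coalgebra.comul (R := R) h) (x ⊗ₜ[R] y))

/-- The twisted bracket `[x, y]_⋆ := Σ ⁅f̄ᵏ(x), f̄ₖ(y)⁆`, as a linear map on `L ⊗ L`. -/
def starBracket {R H L : Type*} [CommRing R] [Ring H] [Bialgebra R H]
    [LieRing L] [LieAlgebra R L] (ρ : H →ₐ[R] Module.End R L) (Finv : H ⊗[R] H) :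
    L ⊗[R] L →ₗ[R] L :=
  (TensorProduct.lift (lieBil R L)).comp (legAct ρ ρ Finv)

/-! Both nested twisted brackets are nested Lie brackets precomposed with the action of one
element of `H ⊗ H ⊗ H`: `(id ⊗ Δ)(F⁻¹) (1 ⊗ F⁻¹)` for `[x, [y, z]_⋆]_⋆` and
`(Δ ⊗ id)(F⁻¹) (F⁻¹ ⊗ 1)` for `[[x, y]_⋆, z]_⋆`, by `H`-equivariance of the bracket. The
2-cocycle condition says that these two elements agree up to reassociation. Hence the Leibniz
form `⁅x, ⁅y, z⁆⁆ = ⁅⁅x, y⁆, z⁆ + ⁅y, ⁅x, z⁆⁆` of the Jacobi identity, applied under this action,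
gives `[[x, y]_⋆, z]_⋆` plus a term in which the first two legs are swapped. By cocommutativity,
swapping the first two legs of `(Δ ⊗ id)(F⁻¹) (F⁻¹ ⊗ 1)` multiplies it on the right by
`F F⁻¹₂₁ ⊗ 1 = τ(ℛ) ⊗ 1`, and this factor is the braiding. -/

section TensorRep

variable {R : Type*} [CommSemiring R]
variable {A B C M N P : Type*} [Semiring A] [Semiring B] [Semiring C]
  [Algebra R A] [Algebra R B] [Algebra R C]
  [AddCommMonoid M] [Module R M] [AddCommMonoid N] [Module R N] [AddCommMonoid P] [Module R P]

def tensorRep (ρM : A →ₐ[R] Module.End R M) (ρN : B →ₐ[R] Module.End R N) :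
    A ⊗[R] B →ₐ[R] Module.End R (M ⊗[R] N) :=
  Module.endTensorEndAlgHom.comp (Algebra.TensorProduct.map ρM ρN)

variable (ρM : A →ₐ[R] Module.End R M) (ρN : B →ₐ[R] Module.End R N)
  (ρP : C →ₐ[R] Module.End R P)

@[simp]
lemma tensorRep_tmul (a : A) (b : B) (m : M) (n : N) :
    tensorRep ρM ρN (a ⊗ₜ b) (m ⊗ₜ n) = ρM a m ⊗ₜ ρN b n := rfl

lemma tensorRep_tmul_one (a : A) :
    tensorRep ρM ρN (a ⊗ₜ (1 : B)) = (ρM a).rTensor N := by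
  ext m n; simp

lemma tensorRep_one_tmul (b : B) :
    tensorRep ρM ρN ((1 : A) ⊗ₜ b) = (ρN b).lTensor M := by
  ext m n; simp

lemma tensorRep_assoc (E : (A ⊗[R] B) ⊗[R] C) :
    tensorRep ρM (tensorRep ρN ρP) (Algebra.TensorProduct.assoc R R R A B C E) ∘ₗ
        (TensorProduct.assoc R M N P).toLinearMap =
      (TensorProduct.assoc R M N P).toLinearMap ∘ₗ tensorRep (tensorRep ρM ρN) ρP E := by
  induction E using TensorProduct.induction_on with
  | zero => simp
  | add E E' hE hE' => simp only [map_add, LinearMap.add_comp, LinearMap.comp_add, hE, hE']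
  | tmul ab c =>
    induction ab using TensorProduct.induction_on with
    | zero => simp
    | add ab ab' h h' =>
      simp only [TensorProduct.add_tmul, map_add, LinearMap.add_comp, LinearMap.comp_add, h, h']
    | tmul a b => ext m n p; simp

lemma tensorRep_comm_rTensor (E : (A ⊗[R] B) ⊗[R] C) :
    tensorRep (tensorRep ρN ρM) ρP
        (Algebra.TensorProduct.map (Algebra.TensorProduct.comm R A B).toAlgHom (AlgHom.id R C) E) ∘ₗ
        (TensorProduct.comm R M N).toLinearMap.rTensor P =
      (TensorProduct.comm R M N).toLinearMap.rTensor P ∘ₗ tensorRep (tensorRep ρM ρN) ρP E := by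
  induction E using TensorProduct.induction_on with
  | zero => simp
  | add E E' hE hE' => simp only [map_add, LinearMap.add_comp, LinearMap.comp_add, hE, hE']
  | tmul ab c =>
    induction ab using TensorProduct.induction_on with
    | zero => simp
    | add ab ab' h h' =>
      simp only [TensorProduct.add_tmul, map_add, LinearMap.add_comp, LinearMap.comp_add, h, h']
    | tmul a b => ext m n p; simp

end TensorRep

section LieTensor

variable (R L : Type*) [CommRing R] [LieRing L] [LieAlgebra R L]

def lieTensor : L ⊗[R] L →ₗ[R] L := TensorProduct.lift (lieBil R L)

variable {R L} in
@[simp]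
lemma lieTensor_tmul (x y : L) : lieTensor R L (x ⊗ₜ y) = ⁅x, y⁆ := rfl

lemma lieTensor_leibniz :
    lieTensor R L ∘ₗ (lieTensor R L).lTensor L ∘ₗ (TensorProduct.assoc R L L L).toLinearMap =
      lieTensor R L ∘ₗ (lieTensor R L).rTensor L +
        lieTensor R L ∘ₗ (lieTensor R L).lTensor L ∘ₗ (TensorProduct.assoc R L L L).toLinearMap ∘ₗ
          (TensorProduct.comm R L L).toLinearMap.rTensor L := by
  ext x y z
  exact leibniz_lie x y z

end LieTensor

lemma legAct_eq_tensorRep {R H M N : Type*} [CommRing R] [Ring H] [Algebra R H]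
    [AddCommGroup M] [Module R M] [AddCommGroup N] [Module R N]
    (ρM : H →ₐ[R] Module.End R M) (ρN : H →ₐ[R] Module.End R N) (G : H ⊗[R] H) :
    legAct ρM ρN G = tensorRep ρM ρN G := by
  induction G using TensorProduct.induction_on with
  | zero => simp
  | tmul g h => ext m n; rfl
  | add G G' hG hG' => simp only [map_add, hG, hG']

section Twist

variable {R H : Type*} [CommRing R] [Ring H] [Bialgebra R H]

lemma IsCocommutative.map_comm_comulTensorId (hcc : IsCocommutative R H) (t : H ⊗[R] H) :
    Algebra.TensorProduct.map (Algebra.TensorProduct.comm R H H).toAlgHom (AlgHom.id R H)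
      (comulTensorId R H t) = comulTensorId R H t := by
  induction t using TensorProduct.induction_on with
  | zero => simp
  | tmul g h => simp [comulTensorId, hcc g]
  | add t t' ht ht' => simp only [map_add, ht, ht']

variable {F Finv : H ⊗[R] H}

/-- `(Δ ⊗ id)(F⁻¹) (F⁻¹ ⊗ 1)` and `(id ⊗ Δ)(F⁻¹) (1 ⊗ F⁻¹)` are the inverses of the two sides
of the cocycle condition. -/
lemma IsDrinfeldTwist.assoc_comulTensorId_mul (hF : IsDrinfeldTwist R F Finv) :
    Algebra.TensorProduct.assoc R R R H H H (comulTensorId R H Finv * (Finv ⊗ₜ 1)) =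
      idTensorComul R H Finv * (1 ⊗ₜ Finv) := by
  obtain ⟨hFFinv, hFinvF, hcocycle⟩ := hF
  set α := Algebra.TensorProduct.assoc R R R H H H
  replace hcocycle : α ((F ⊗ₜ 1) * comulTensorId R H F) = (1 ⊗ₜ F) * idTensorComul R H F :=
    hcocycle
  have hYinv : comulTensorId R H Finv * (Finv ⊗ₜ 1) * ((F ⊗ₜ 1) * comulTensorId R H F) = 1 := by
    rw [mul_assoc, ← mul_assoc (Finv ⊗ₜ 1), Algebra.TensorProduct.tmul_mul_tmul, hFinvF, mul_one,
      ← Algebra.TensorProduct.one_def, one_mul, ← map_mul, hFinvF, map_one]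
  have hXinv : (1 ⊗ₜ F) * idTensorComul R H F * (idTensorComul R H Finv * (1 ⊗ₜ Finv)) = 1 := by
    rw [mul_assoc, ← mul_assoc (idTensorComul R H F), ← map_mul, hFFinv, map_one, one_mul,
      Algebra.TensorProduct.tmul_mul_tmul, hFFinv, mul_one, ← Algebra.TensorProduct.one_def]
  calc α (comulTensorId R H Finv * (Finv ⊗ₜ 1))
      = α (comulTensorId R H Finv * (Finv ⊗ₜ 1)) *
          ((1 ⊗ₜ F) * idTensorComul R H F * (idTensorComul R H Finv * (1 ⊗ₜ Finv))) := by
        rw [hXinv, mul_one]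
    _ = idTensorComul R H Finv * (1 ⊗ₜ Finv) := by
        rw [← mul_assoc, ← hcocycle, ← map_mul, hYinv, map_one, one_mul]

lemma IsCocommutative.map_comm_comulTensorId_mul (hcc : IsCocommutative R H)
    (hFinvF : Finv * F = 1) :
    Algebra.TensorProduct.map (Algebra.TensorProduct.comm R H H).toAlgHom (AlgHom.id R H)
        (comulTensorId R H Finv * (Finv ⊗ₜ 1)) =
      comulTensorId R H Finv * (Finv ⊗ₜ 1) *
        (Algebra.TensorProduct.comm R H H (Rmat R F Finv) ⊗ₜ 1) := by
  have hR : Algebra.TensorProduct.comm R H H (Rmat R F Finv) =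
      F * Algebra.TensorProduct.comm R H H Finv := by
    rw [Rmat, map_mul]
    congr 1
    exact (Algebra.TensorProduct.comm R H H).symm_apply_apply F
  rw [map_mul, hcc.map_comm_comulTensorId, hR, mul_assoc, Algebra.TensorProduct.tmul_mul_tmul,
    ← mul_assoc Finv, hFinvF, one_mul, mul_one]
  rfl

end Twist

section HLieAlgebra

variable {R H L : Type*} [CommRing R] [Ring H] [Bialgebra R H] [LieRing L] [LieAlgebra R L]
  {ρ : H →ₐ[R] Module.End R L}

lemma starBracket_eq (Finv : H ⊗[R] H) :
    starBracket ρ Finv = lieTensor R L ∘ₗ tensorRep ρ ρ Finv := by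
  rw [starBracket, legAct_eq_tensorRep]
  rfl

lemma IsCocommutative.rTensor_comm_comp_tensorRep (hcc : IsCocommutative R H)
    {F Finv : H ⊗[R] H} (hFinvF : Finv * F = 1) :
    (TensorProduct.comm R L L).toLinearMap.rTensor L ∘ₗ
        tensorRep (tensorRep ρ ρ) ρ (comulTensorId R H Finv * (Finv ⊗ₜ 1)) =
      tensorRep (tensorRep ρ ρ) ρ (comulTensorId R H Finv * (Finv ⊗ₜ 1)) ∘ₗ
        (tensorRep ρ ρ (Algebra.TensorProduct.comm R H H (Rmat R F Finv))).rTensor L ∘ₗ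
          (TensorProduct.comm R L L).toLinearMap.rTensor L := by
  rw [← tensorRep_comm_rTensor, hcc.map_comm_comulTensorId_mul hFinvF, map_mul,
    tensorRep_tmul_one]
  rfl

namespace IsHLieAlgebra

variable (hL : IsHLieAlgebra R ρ)
include hL

lemma comp_lieTensor (h : H) :
    ρ h ∘ₗ lieTensor R L = lieTensor R L ∘ₗ tensorRep ρ ρ (Coalgebra.comul (R := R) h) := by
  ext x y
  have := hL h x y
  rw [legAct_eq_tensorRep] at this
  exact this

lemma tensorRep_comp_lTensor_lieTensor (G : H ⊗[R] H) :
    tensorRep ρ ρ G ∘ₗ (lieTensor R L).lTensor L =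
      (lieTensor R L).lTensor L ∘ₗ tensorRep ρ (tensorRep ρ ρ) (idTensorComul R H G) := by
  induction G using TensorProduct.induction_on with
  | zero => simp
  | add G G' hG hG' => simp only [map_add, LinearMap.add_comp, LinearMap.comp_add, hG, hG']
  | tmul g h =>
    ext x y z
    have := LinearMap.congr_fun (hL.comp_lieTensor h) (y ⊗ₜ z)
    simp_all [idTensorComul]

lemma tensorRep_comp_rTensor_lieTensor (G : H ⊗[R] H) :
    tensorRep ρ ρ G ∘ₗ (lieTensor R L).rTensor L =
      (lieTensor R L).rTensor L ∘ₗ tensorRep (tensorRep ρ ρ) ρ (comulTensorId R H G) := by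
  induction G using TensorProduct.induction_on with
  | zero => simp
  | add G G' hG hG' => simp only [map_add, LinearMap.add_comp, LinearMap.comp_add, hG, hG']
  | tmul g h =>
    ext x y z
    have := LinearMap.congr_fun (hL.comp_lieTensor g) (x ⊗ₜ y)
    simp_all [comulTensorId]

lemma starBracket_comp_lTensor_starBracket (Finv : H ⊗[R] H) :
    starBracket ρ Finv ∘ₗ (starBracket ρ Finv).lTensor L =
      lieTensor R L ∘ₗ (lieTensor R L).lTensor L ∘ₗ
        tensorRep ρ (tensorRep ρ ρ) (idTensorComul R H Finv * (1 ⊗ₜ Finv)) := by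
  rw [starBracket_eq, LinearMap.lTensor_comp, map_mul, Module.End.mul_eq_comp,
    tensorRep_one_tmul, LinearMap.comp_assoc, ← LinearMap.comp_assoc _ _ (tensorRep ρ ρ Finv),
    hL.tensorRep_comp_lTensor_lieTensor]
  simp only [LinearMap.comp_assoc]

lemma starBracket_comp_rTensor_starBracket (Finv : H ⊗[R] H) :
    starBracket ρ Finv ∘ₗ (starBracket ρ Finv).rTensor L =
      lieTensor R L ∘ₗ (lieTensor R L).rTensor L ∘ₗ
        tensorRep (tensorRep ρ ρ) ρ (comulTensorId R H Finv * (Finv ⊗ₜ 1)) := by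
  rw [starBracket_eq, LinearMap.rTensor_comp, map_mul, Module.End.mul_eq_comp,
    tensorRep_tmul_one, LinearMap.comp_assoc, ← LinearMap.comp_assoc _ _ (tensorRep ρ ρ Finv),
    hL.tensorRep_comp_rTensor_lieTensor]
  simp only [LinearMap.comp_assoc]

lemma starBracket_comp_lTensor_starBracket_comp_assoc {F Finv : H ⊗[R] H}
    (hF : IsDrinfeldTwist R F Finv) :
    starBracket ρ Finv ∘ₗ (starBracket ρ Finv).lTensor L ∘ₗ
        (TensorProduct.assoc R L L L).toLinearMap =
      lieTensor R L ∘ₗ (lieTensor R L).lTensor L ∘ₗ (TensorProduct.assoc R L L L).toLinearMap ∘ₗ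
        tensorRep (tensorRep ρ ρ) ρ (comulTensorId R H Finv * (Finv ⊗ₜ 1)) := by
  rw [← LinearMap.comp_assoc, hL.starBracket_comp_lTensor_starBracket,
    ← hF.assoc_comulTensorId_mul]
  simp only [LinearMap.comp_assoc]
  rw [tensorRep_assoc]

end IsHLieAlgebra

end HLieAlgebra

/-- For a Drinfel'd twist on a cocommutative bialgebra `H` and a Lie
algebra `L` in `H`-modules, the twisted bracket satisfies the braided Jacobi identity:
`[x, [y, z]_⋆]_⋆ = [[x, y]_⋆, z]_⋆ + Σ_k [R_k(y), [R^k(x), z]_⋆]_⋆`,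
where `ℛ⁻¹ = τ(ℛ) = Σ_k R_k ⊗ R^k`. -/
theorem starBracket_braided_jacobi
    (R : Type*) [CommRing R] (H : Type*) [Ring H] [Bialgebra R H]
    (hcc : IsCocommutative R H)
    (L : Type*) [LieRing L] [LieAlgebra R L]
    (ρ : H →ₐ[R] Module.End R L) (hL : IsHLieAlgebra R ρ)
    (F Finv : H ⊗[R] H) (hF : IsDrinfeldTwist R F Finv) :
    ∀ x y z : L,
      starBracket ρ Finv (x ⊗ₜ[R] (starBracket ρ Finv (y ⊗ₜ[R] z))) =
        starBracket ρ Finv ((starBracket ρ Finv (x ⊗ₜ[R] y)) ⊗ₜ[R] z) +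
          ((starBracket ρ Finv).comp
              (TensorProduct.map LinearMap.id (starBracket ρ Finv)))
            ((TensorProduct.assoc R L L L)
              ((legAct ρ ρ ((Algebra.TensorProduct.comm R H H) (Rmat R F Finv))
                  (y ⊗ₜ[R] x)) ⊗ₜ[R] z)) := by
  set Φ := tensorRep (tensorRep ρ ρ) ρ (comulTensorId R H Finv * (Finv ⊗ₜ[R] (1 : H)))
  set sb := starBracket ρ Finv
  set lt := lieTensor R L
  set α := (TensorProduct.assoc R L L L).toLinearMap
  set swap := (TensorProduct.comm R L L).toLinearMap.rTensor L
  set braid := (tensorRep ρ ρ (Algebra.TensorProduct.comm R H H (Rmat R F Finv))).rTensor L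
  have hnestRight : sb ∘ₗ sb.lTensor L ∘ₗ α = lt ∘ₗ lt.lTensor L ∘ₗ α ∘ₗ Φ :=
    hL.starBracket_comp_lTensor_starBracket_comp_assoc hF
  have hnestLeft : sb ∘ₗ sb.rTensor L = lt ∘ₗ lt.rTensor L ∘ₗ Φ :=
    hL.starBracket_comp_rTensor_starBracket Finv
  have hswap : swap ∘ₗ Φ = Φ ∘ₗ braid ∘ₗ swap := hcc.rTensor_comm_comp_tensorRep hF.2.1
  have key :
      sb ∘ₗ sb.lTensor L ∘ₗ α = sb ∘ₗ sb.rTensor L + sb ∘ₗ sb.lTensor L ∘ₗ α ∘ₗ braid ∘ₗ swap :=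
    calc sb ∘ₗ sb.lTensor L ∘ₗ α
        = (lt ∘ₗ lt.lTensor L ∘ₗ α) ∘ₗ Φ := by rw [hnestRight]; simp only [LinearMap.comp_assoc]
      _ = lt ∘ₗ lt.rTensor L ∘ₗ Φ + lt ∘ₗ lt.lTensor L ∘ₗ α ∘ₗ swap ∘ₗ Φ := by
        rw [lieTensor_leibniz]; simp only [LinearMap.add_comp, LinearMap.comp_assoc]; rfl
      _ = lt ∘ₗ lt.rTensor L ∘ₗ Φ + (lt ∘ₗ lt.lTensor L ∘ₗ α ∘ₗ Φ) ∘ₗ braid ∘ₗ swap := by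
        rw [hswap]; simp only [LinearMap.comp_assoc]
      _ = sb ∘ₗ sb.rTensor L + sb ∘ₗ sb.lTensor L ∘ₗ α ∘ₗ braid ∘ₗ swap := by
        rw [hnestLeft, ← hnestRight]; simp only [LinearMap.comp_assoc]
  intro x y z
  rw [legAct_eq_tensorRep]
  exact LinearMap.congr_fun key ((x ⊗ₜ y) ⊗ₜ z)
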